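/- There exists a constant C > 0 such that for all ζ ∈ [−N, 0) and all k = k₀ + u e^{iπ/4} with 0 < u ≤ k₀/2, one has |e^{−2χ(ζ,k)} − e^{−2χ(ζ,k₀)}| ≤ C |k − k₀| (k₀⁻¹ + |ln |k − k₀||). (This is estimate (4.42) used in the proof of the paper's Lemma 4.2; the extra k₀⁻¹ term distinguishes it from the corresponding local-case estimate.) -/

import Mathlib

open Set MeasureTheory

noncomputable section

/-- `k₀(ζ) = √(-ζ/12)`. -/
def k0 (ζ : ℝ) : ℝ := Real.sqrt (-ζ / 12)

/-- `e^{iπ/4}`. -/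
def e4 : ℂ := Complex.exp (Real.pi * Complex.I / 4)

/-- `χ(ζ,k) = (1/(2πi)) ∫_{-k₀}^{k₀} (L(s) - L(k₀))/(s - k) ds`. -/
def chi (L : ℝ → ℂ) (ζ : ℝ) (k : ℂ) : ℂ :=
  (2 * Real.pi * Complex.I)⁻¹ *
    ∫ s in (-(k0 ζ))..(k0 ζ), (L s - L (k0 ζ)) / ((s : ℂ) - k)

/-! Put k = k₀ + u e^{iπ/4}. The difference of the two Cauchy integrals has kernel
(L(s) - L(k₀)) (k - k₀) / ((s - k)(s - k₀)): the Lipschitz bound on L cancels the factor s - k₀,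
and since k lies on the ray of angle π/4 from k₀, |s - k| ≥ (k₀ - s + u)/√2 for s ≤ k₀.
Integrating gives |χ(k) - χ(k₀)| ≲ u log((2k₀ + u)/u) ≲ u (k₀⁻¹ + |log u|), a quantity that is
also bounded uniformly in ζ, as is |χ(k₀)| ≲ k₀. Then |e^a - e^b| ≤ |a - b| e^{|b| + |a - b|}. -/

open Real
open scoped NNReal

theorem ContDiffOn.exists_lipschitzOnWith_Icc {E : Type*} [NormedAddCommGroup E]
    [NormedSpace ℝ E] {f : ℝ → E} {a b : ℝ} (hf : ContDiffOn ℝ 1 f (Icc a b)) :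
    ∃ C, LipschitzOnWith C f (Icc a b) := by
  rcases lt_or_ge a b with hab | hba
  · obtain ⟨C, hC⟩ := isCompact_Icc.exists_bound_of_continuousOn
      (hf.continuousOn_derivWithin (uniqueDiffOn_Icc hab) le_rfl)
    refine ⟨C.toNNReal, (convex_Icc a b).lipschitzOnWith_of_nnnorm_derivWithin_le
      (hf.differentiableOn one_ne_zero) fun x hx => ?_⟩
    rw [← NNReal.coe_le_coe, coe_nnnorm]
    exact (hC x hx).trans (le_max_left _ _)
  · exact ⟨0, fun x hx y hy => by simp [subsingleton_Icc_of_ge hba hx hy]⟩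

theorem Complex.norm_exp_sub_exp_le (a b : ℂ) :
    ‖Complex.exp a - Complex.exp b‖ ≤ ‖a - b‖ * Real.exp (‖b‖ + ‖a - b‖) := by
  have h := Complex.norm_exp_sub_sum_le_norm_mul_exp (a - b) 1
  simp only [Finset.range_one, Finset.sum_singleton, pow_zero, Nat.factorial_zero,
    Nat.cast_one, div_one, pow_one] at h
  calc ‖Complex.exp a - Complex.exp b‖
      = ‖Complex.exp b‖ * ‖Complex.exp (a - b) - 1‖ := by
        rw [← norm_mul, mul_sub, ← Complex.exp_add, add_sub_cancel, mul_one]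
    _ ≤ Real.exp ‖b‖ * (‖a - b‖ * Real.exp ‖a - b‖) := by
        gcongr
        rw [Complex.norm_exp]
        exact Real.exp_le_exp.2 (Complex.re_le_norm b)
    _ = ‖a - b‖ * Real.exp (‖b‖ + ‖a - b‖) := by rw [Real.exp_add]; ring

theorem Real.abs_log_le_add_inv {x : ℝ} (hx : 0 < x) : |log x| ≤ x + x⁻¹ := by
  rw [abs_le]
  constructor
  · have := Real.log_le_sub_one_of_pos (inv_pos.2 hx)
    rw [Real.log_inv] at this
    linarith
  · linarith [Real.log_le_sub_one_of_pos hx, inv_pos.2 hx]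

theorem e4_re : e4.re = √2 / 2 := by
  rw [e4, show (π : ℂ) * Complex.I / 4 = ((π / 4 : ℝ) : ℂ) * Complex.I by push_cast; ring,
    Complex.exp_ofReal_mul_I_re, Real.cos_pi_div_four]

theorem e4_im : e4.im = √2 / 2 := by
  rw [e4, show (π : ℂ) * Complex.I / 4 = ((π / 4 : ℝ) : ℂ) * Complex.I by push_cast; ring,
    Complex.exp_ofReal_mul_I_im, Real.sin_pi_div_four]

theorem norm_e4 : ‖e4‖ = 1 := by
  rw [e4, Complex.norm_exp]
  norm_num

theorem norm_ofReal_mul_e4 {u : ℝ} (hu : 0 ≤ u) : ‖(u : ℂ) * e4‖ = u := by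
  rw [norm_mul, norm_e4, Complex.norm_real, Real.norm_of_nonneg hu, mul_one]

theorem ofReal_sub_add_mul_e4_ne_zero (s r : ℝ) {u : ℝ} (hu : 0 < u) :
    (s : ℂ) - (r + u * e4) ≠ 0 := by
  intro h
  have him := congrArg Complex.im h
  simp only [Complex.sub_im, Complex.add_im, Complex.ofReal_im, Complex.mul_im,
    Complex.ofReal_re, e4_im, e4_re, Complex.zero_im] at him
  nlinarith [Real.sqrt_pos.2 (show (0 : ℝ) < 2 by norm_num)]

theorem sub_add_div_sqrt_two_le_norm {s r u : ℝ} (hs : s ≤ r) (hu : 0 ≤ u) :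
    (r - s + u) / √2 ≤ ‖(s : ℂ) - (r + u * e4)‖ := by
  rw [Complex.norm_def, Real.le_sqrt (by positivity) (Complex.normSq_nonneg _),
    Complex.normSq_apply]
  simp only [Complex.sub_re, Complex.sub_im, Complex.add_re, Complex.add_im, Complex.mul_re,
    Complex.mul_im, Complex.ofReal_re, Complex.ofReal_im, e4_re, e4_im]
  have h1 : 1 ≤ √2 := Real.one_le_sqrt.2 (by norm_num)
  have h2 : √2 ^ 2 = 2 := Real.sq_sqrt (by norm_num)
  have hsq : ∀ x : ℝ, (x / √2) ^ 2 = x ^ 2 / 2 := fun x => by rw [div_pow, h2]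
  rw [hsq]
  ring_nf
  rw [h2]
  nlinarith [mul_nonneg (mul_nonneg (sub_nonneg.2 h1) (sub_nonneg.2 hs)) hu]

theorem norm_div_sub_div_le {z : ℂ} {s r u M : ℝ} (hM : 0 ≤ M) (hs : s ≤ r) (hu : 0 < u)
    (hz : ‖z‖ ≤ M * |s - r|) :
    ‖z / ((s : ℂ) - (r + u * e4)) - z / ((s : ℂ) - r)‖ ≤ √2 * M * u / (r - s + u) := by
  have hpos : 0 < r - s + u := by linarith
  rcases eq_or_lt_of_le hs with rfl | hlt
  · rw [sub_self, abs_zero, mul_zero, norm_le_zero_iff] at hz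
    rw [hz, zero_div, zero_div, sub_zero, norm_zero]
    positivity
  have hsr : 0 < |s - r| := abs_pos.2 (sub_ne_zero.2 hlt.ne)
  have hk := ofReal_sub_add_mul_e4_ne_zero s r hu
  have hsr' : (s : ℂ) - r ≠ 0 := by exact_mod_cast (sub_ne_zero.2 hlt.ne)
  have hlow := sub_add_div_sqrt_two_le_norm hs hu.le
  rw [div_sub_div _ _ hk hsr', show z * ((s : ℂ) - r) - ((s : ℂ) - (r + u * e4)) * z
      = z * (u * e4) by ring, norm_div, norm_mul, norm_ofReal_mul_e4 hu.le, norm_mul,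
    ← Complex.ofReal_sub, Complex.norm_real, Real.norm_eq_abs]
  calc ‖z‖ * u / (‖(s : ℂ) - (r + u * e4)‖ * |s - r|)
      ≤ M * |s - r| * u / ((r - s + u) / √2 * |s - r|) := by gcongr
    _ = √2 * M * u / (r - s + u) := by field_simp

section CauchyIntegral

variable {f : ℝ → ℂ} {M : ℝ≥0} {a r u : ℝ}

theorem norm_sub_div_sub_le (hf : LipschitzOnWith M f (Icc a r)) {s : ℝ} (hs : s ∈ Icc a r) :
    ‖(f s - f r) / ((s : ℂ) - r)‖ ≤ M := by
  rcases eq_or_ne s r with rfl | hsr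
  · simp
  rw [norm_div, ← Complex.ofReal_sub, Complex.norm_real,
    div_le_iff₀ (norm_pos_iff.2 (sub_ne_zero.2 hsr))]
  exact hf.norm_sub_le hs ⟨hs.1.trans hs.2, le_rfl⟩

theorem intervalIntegrable_sub_div_sub (hf : LipschitzOnWith M f (Icc a r)) (har : a ≤ r) :
    IntervalIntegrable (fun s : ℝ => (f s - f r) / ((s : ℂ) - r)) volume a r := by
  rw [intervalIntegrable_iff_integrableOn_Ioc_of_le har]
  refine Integrable.mono' (g := fun _ => (M : ℝ)) (integrableOn_const measure_Ioc_lt_top.ne)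
    ?_ ((ae_restrict_mem measurableSet_Ioc).mono fun s hs =>
      norm_sub_div_sub_le hf (Ioc_subset_Icc_self hs))
  have hfm : AEMeasurable f (volume.restrict (Ioc a r)) :=
    (hf.continuousOn.mono Ioc_subset_Icc_self).aemeasurable measurableSet_Ioc
  exact ((hfm.sub aemeasurable_const).div
    (Complex.measurable_ofReal.sub measurable_const).aemeasurable).aestronglyMeasurable

theorem intervalIntegrable_sub_div_sub_add_mul_e4 (hf : LipschitzOnWith M f (Icc a r))
    (har : a ≤ r) (hu : 0 < u) :
    IntervalIntegrable (fun s : ℝ => (f s - f r) / ((s : ℂ) - (r + u * e4))) volume a r := by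
  refine ContinuousOn.intervalIntegrable ?_
  rw [uIcc_of_le har]
  exact (hf.continuousOn.sub continuousOn_const).div (by fun_prop)
    fun s _ => ofReal_sub_add_mul_e4_ne_zero s r hu

theorem integral_inv_sub_add (har : a ≤ r) (hu : 0 < u) :
    ∫ s in a..r, (r - s + u)⁻¹ = log ((r - a + u) / u) := by
  simp_rw [sub_add_eq_add_sub r]
  rw [intervalIntegral.integral_comp_sub_left (fun x : ℝ => x⁻¹) (r + u), add_sub_cancel_left,
    integral_inv_of_pos hu (by linarith)]

theorem norm_integral_sub_div_sub_le (hf : LipschitzOnWith M f (Icc a r)) (har : a ≤ r) :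
    ‖∫ s in a..r, (f s - f r) / ((s : ℂ) - r)‖ ≤ M * (r - a) := by
  have h := intervalIntegral.norm_integral_le_of_norm_le_const fun s hs =>
    norm_sub_div_sub_le hf (a := a) (r := r) (uIoc_subset_uIcc.trans (uIcc_of_le har).subset hs)
  rwa [abs_of_nonneg (sub_nonneg.2 har)] at h

theorem norm_integral_sub_div_sub_add_mul_e4_sub_le (hf : LipschitzOnWith M f (Icc a r))
    (har : a ≤ r) (hu : 0 < u) :
    ‖(∫ s in a..r, (f s - f r) / ((s : ℂ) - (r + u * e4))) -
        ∫ s in a..r, (f s - f r) / ((s : ℂ) - r)‖ ≤ √2 * M * u * log ((r - a + u) / u) := by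
  have hg : IntervalIntegrable (fun s => √2 * M * u / (r - s + u)) volume a r := by
    refine ContinuousOn.intervalIntegrable ?_
    rw [uIcc_of_le har]
    exact continuousOn_const.div (by fun_prop) fun s hs => by linarith [hs.2]
  rw [← intervalIntegral.integral_sub (intervalIntegrable_sub_div_sub_add_mul_e4 hf har hu)
    (intervalIntegrable_sub_div_sub hf har)]
  calc _ ≤ ∫ s in a..r, √2 * M * u / (r - s + u) :=
        intervalIntegral.norm_integral_le_of_norm_le har (ae_of_all _ fun s hs =>
          norm_div_sub_div_le M.coe_nonneg hs.2 hu
            (by simpa [Real.norm_eq_abs] using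
              hf.norm_sub_le ⟨hs.1.le, hs.2⟩ ⟨har, le_rfl⟩)) hg
    _ = √2 * M * u * log ((r - a + u) / u) := by
        simp_rw [div_eq_mul_inv (√2 * M * u)]
        rw [intervalIntegral.integral_const_mul, integral_inv_sub_add har hu]

end CauchyIntegral

theorem Real.log_two_mul_add_div_le {u r : ℝ} (hu : 0 < u) (hur : u ≤ r) :
    log ((2 * r + u) / u) ≤ (3 * r ^ 2 + 1) * (r⁻¹ + |log u|) := by
  have hr : 0 < r := hu.trans_le hur
  have hnum : log (2 * r + u) ≤ 3 * r ^ 2 * r⁻¹ := by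
    rw [show 3 * r ^ 2 * r⁻¹ = 3 * r by field_simp]
    linarith [Real.log_le_sub_one_of_pos (show 0 < 2 * r + u by positivity)]
  rw [Real.log_div (by positivity) hu.ne']
  nlinarith [neg_abs_le (log u), abs_nonneg (log u), inv_pos.2 hr, sq_nonneg r]

theorem Real.mul_inv_add_abs_log_le {u r : ℝ} (hu : 0 < u) (hur : u ≤ r / 2) :
    u * (r⁻¹ + |log u|) ≤ 3 / 2 + r ^ 2 := by
  have hr : 0 < r := by linarith
  have h1 : u * r⁻¹ ≤ 1 / 2 := by
    rw [← div_eq_mul_inv, div_le_iff₀ hr]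
    linarith
  have h2 : u * |log u| ≤ u ^ 2 + 1 := by
    have := mul_le_mul_of_nonneg_left (Real.abs_log_le_add_inv hu) hu.le
    rwa [mul_add, mul_inv_cancel₀ hu.ne', ← sq] at this
  nlinarith

theorem k0_nonneg (ζ : ℝ) : 0 ≤ k0 ζ := Real.sqrt_nonneg _

theorem norm_two_pi_I_inv : ‖(2 * π * Complex.I)⁻¹‖ = (2 * π)⁻¹ := by
  simp [Real.pi_pos.le]

section Chi

variable {L : ℝ → ℂ} {M : ℝ≥0} {ζ : ℝ}

theorem norm_chi_k0_le (hL : LipschitzOnWith M L (Icc (-k0 ζ) (k0 ζ))) :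
    ‖chi L ζ (k0 ζ)‖ ≤ M * k0 ζ / π := by
  have h := norm_integral_sub_div_sub_le hL (neg_le_self (k0_nonneg ζ))
  rw [chi, norm_mul, norm_two_pi_I_inv]
  calc _ ≤ (2 * π)⁻¹ * (M * (k0 ζ - -k0 ζ)) := by gcongr
    _ = M * k0 ζ / π := by field_simp; ring

theorem norm_chi_add_mul_e4_sub_chi_k0_le (hL : LipschitzOnWith M L (Icc (-k0 ζ) (k0 ζ)))
    {u : ℝ} (hu : 0 < u) :
    ‖chi L ζ (k0 ζ + u * e4) - chi L ζ (k0 ζ)‖ ≤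
      √2 * M * u * log ((2 * k0 ζ + u) / u) / (2 * π) := by
  have h := norm_integral_sub_div_sub_add_mul_e4_sub_le hL (neg_le_self (k0_nonneg ζ)) hu
  rw [sub_neg_eq_add, ← two_mul] at h
  rw [chi, chi, ← mul_sub, norm_mul, norm_two_pi_I_inv, inv_mul_eq_div]
  gcongr

end Chi

theorem exp_chi_difference_estimate_general (N : ℝ) (L : ℝ → ℂ)
    (hL : ContDiffOn ℝ 1 L (Icc (-Real.sqrt (N / 12)) (Real.sqrt (N / 12)))) :
    ∃ C : ℝ, 0 < C ∧ ∀ ζ ∈ Ico (-N) (0 : ℝ), ∀ u : ℝ, 0 < u → u ≤ k0 ζ / 2 →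
      ‖Complex.exp (-(2 * chi L ζ ((k0 ζ : ℂ) + (u : ℂ) * e4))) -
          Complex.exp (-(2 * chi L ζ (k0 ζ : ℂ)))‖ ≤
        C * ‖((k0 ζ : ℂ) + (u : ℂ) * e4) - (k0 ζ : ℂ)‖ *
          ((k0 ζ)⁻¹ + |Real.log ‖((k0 ζ : ℂ) + (u : ℂ) * e4) - (k0 ζ : ℂ)‖|) := by
  set K := √(N / 12)
  obtain ⟨M, hM⟩ := hL.exists_lipschitzOnWith_Icc
  set D := √2 * M * (3 * K ^ 2 + 1) / (2 * π)
  refine ⟨2 * D * Real.exp (2 * (M * K / π) + 2 * (D * (3 / 2 + K ^ 2))) + 1, by positivity, ?_⟩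
  rintro ζ ⟨hNζ, hζ0⟩ u hu hur
  have hr : 0 < k0 ζ := Real.sqrt_pos.2 (by linarith)
  have hrK : k0 ζ ≤ K := Real.sqrt_le_sqrt (by linarith)
  have hLr : LipschitzOnWith M L (Icc (-k0 ζ) (k0 ζ)) :=
    hM.mono (Icc_subset_Icc (neg_le_neg hrK) hrK)
  set w := u * ((k0 ζ)⁻¹ + |log u|)
  set Δ := chi L ζ (k0 ζ + u * e4) - chi L ζ (k0 ζ)
  have hχ₀ : ‖chi L ζ (k0 ζ)‖ ≤ M * K / π := (norm_chi_k0_le hLr).trans (by gcongr)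
  have hΔ : ‖Δ‖ ≤ D * w := by
    refine (norm_chi_add_mul_e4_sub_chi_k0_le hLr hu).trans ?_
    calc √2 * M * u * log ((2 * k0 ζ + u) / u) / (2 * π)
        ≤ √2 * M * u * ((3 * K ^ 2 + 1) * ((k0 ζ)⁻¹ + |log u|)) / (2 * π) := by
          gcongr
          exact (Real.log_two_mul_add_div_le hu (by linarith)).trans (by gcongr)
      _ = D * w := by ring
  have hΔ' : ‖Δ‖ ≤ D * (3 / 2 + K ^ 2) :=
    hΔ.trans (by gcongr; exact (Real.mul_inv_add_abs_log_le hu hur).trans (by gcongr))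
  rw [add_sub_cancel_left, norm_ofReal_mul_e4 hu.le]
  calc _ ≤ _ := Complex.norm_exp_sub_exp_le _ _
    _ = 2 * ‖Δ‖ * Real.exp (2 * ‖chi L ζ (k0 ζ)‖ + 2 * ‖Δ‖) := by
        simp only [Δ, neg_sub_neg, ← mul_sub, norm_neg, norm_mul, norm_sub_rev (chi L ζ (k0 ζ))]
        norm_num
    _ ≤ 2 * (D * w) * Real.exp (2 * (M * K / π) + 2 * (D * (3 / 2 + K ^ 2))) := by gcongr
    _ ≤ _ := by nlinarith [show 0 ≤ w by positivity]

/-- Estimate (4.42): |e^{-2χ(ζ,k)} - e^{-2χ(ζ,k₀)}| ≤ C|k-k₀|(k₀⁻¹ + |ln|k-k₀||)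
for k = k₀ + u e^{iπ/4}, 0 < u ≤ k₀/2, uniformly in ζ ∈ [-N, 0). -/
theorem exp_chi_difference_estimate (N : ℝ) (hN : 0 < N) (L : ℝ → ℂ)
    (hL : ContDiffOn ℝ 1 L (Icc (-Real.sqrt (N / 12)) (Real.sqrt (N / 12))))
    (hsym : ∀ s ∈ Icc (-Real.sqrt (N / 12)) (Real.sqrt (N / 12)),
      L (-s) = starRingEnd ℂ (L s)) :
    ∃ C : ℝ, 0 < C ∧ ∀ ζ ∈ Ico (-N) (0 : ℝ), ∀ u : ℝ, 0 < u → u ≤ k0 ζ / 2 →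
      ‖Complex.exp (-(2 * chi L ζ ((k0 ζ : ℂ) + (u : ℂ) * e4))) -
          Complex.exp (-(2 * chi L ζ (k0 ζ : ℂ)))‖ ≤
        C * ‖((k0 ζ : ℂ) + (u : ℂ) * e4) - (k0 ζ : ℂ)‖ *
          ((k0 ζ)⁻¹ + |Real.log ‖((k0 ζ : ℂ) + (u : ℂ) * e4) - (k0 ζ : ℂ)‖|) :=
  exp_chi_difference_estimate_general N L hL
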